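/- Let n ≥ 2 be an even integer and let i be an integer with 0 ≤ i ≤ n − 1. Consider S(n, i) := Σ_{k ≥ 0} Σ_{l ≥ 0, k + l ≤ n/2} M(n/2; k, l) · (−1)^l · C̃(n − 2k − 2l − 1, i − 2l), where M(m; a, b) = m!/(a! b! (m−a−b)!) and C̃(m, r) is the generalized binomial coefficient for integer m: C̃(m, r) = m(m−1)⋯(m−r+1)/r! for integers r ≥ 0 (so C̃(−1, r) = (−1)^r) and C̃(m, r) = 0 for r < 0. Then: (a) if 2i ≤ n − 1, S(n, i) = 2^{n/2} · C(n/2 − 1, i); and (b) if n/2 ≤ i ≤ n − 1, S(n, i) = 0. -/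

import Mathlib

open Finset

/-- `M(m; a, b) = m!/(a! b! (m−a−b)!)` when `a + b ≤ m`, and `0` otherwise. -/
noncomputable def Mcoef (m a b : ℕ) : ℝ :=
  if a + b ≤ m then
    (Nat.factorial m : ℝ) /
      ((Nat.factorial a : ℝ) * (Nat.factorial b : ℝ) * (Nat.factorial (m - a - b) : ℝ))
  else 0

/-- `M₃(m; a, b, c) = m!/(a! b! c!)` when `a, b, c` are nonnegative integers with
`a + b + c = m`, and `0` otherwise (in particular when some argument is not a
nonnegative integer). -/
noncomputable def M3 (m : ℕ) (a b c : ℚ) : ℝ :=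
  if 0 ≤ a ∧ 0 ≤ b ∧ 0 ≤ c ∧ a.den = 1 ∧ b.den = 1 ∧ c.den = 1 ∧ a + b + c = (m : ℚ) then
    (Nat.factorial m : ℝ) /
      ((Nat.factorial a.num.toNat : ℝ) * (Nat.factorial b.num.toNat : ℝ) *
        (Nat.factorial c.num.toNat : ℝ))
  else 0

/-- Ordinary binomial coefficient `C(a, b)` for integers, `0` when `b < 0` or `b > a`. -/
noncomputable def Cb (a b : ℤ) : ℝ :=
  if 0 ≤ b ∧ b ≤ a then ((a.toNat).choose b.toNat : ℝ) else 0

/-- Generalized binomial coefficient `C̃(m, r) = m(m−1)⋯(m−r+1)/r!` for integer `m`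
and integer `r ≥ 0`, and `0` for `r < 0`. -/
noncomputable def Cgen (m r : ℤ) : ℝ :=
  if 0 ≤ r then (∏ k ∈ Finset.range r.toNat, ((m : ℝ) - (k : ℝ))) / (Nat.factorial r.toNat : ℝ)
  else 0

/-!
Put `m = n / 2`. Shifting the upper index of every `C̃` by an integer `c` gives sums
`T_c(j)`, and `T_0(j)` is the coefficient of `X^j` in
`∑ M(m; k, l) (-X²)^l ((1 + X)²)^(m-k-l) = (1 - X² + (1 + X)²)^m = 2^m (1 + X)^m`, i.e.
`2^m C(m, j)`. Pascal's rule `C̃(a + 1, r) = C̃(a, r) + C̃(a, r - 1)` holds for all integers `a`,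
so `T_(c+1)(j) = T_c(j) + T_c(j - 1)`; since `T_c(j)` vanishes for `j < 0`, this recursion
determines `T_c` from `T_(c+1)` as well. Hence `T_c(j) = 2^m C̃(m + c, j)` for every `c`, and
`S(n, i) = T_(-1)(i) = 2^m C(m - 1, i)`, which vanishes for `i ≥ m`.
-/

open Polynomial

theorem Cgen_of_neg {m r : ℤ} (hr : r < 0) : Cgen m r = 0 :=
  if_neg hr.not_ge

theorem Cgen_natCast_right (m : ℤ) (r : ℕ) : Cgen m r = Ring.choose (m : ℝ) r := by
  rw [Cgen, if_pos (Int.natCast_nonneg r), Int.toNat_natCast, Ring.choose_eq_smul,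
    ← aeval_eq_smeval, ← eval_map_algebraMap, descPochhammer_map,
    descPochhammer_eval_eq_prod_range, smul_eq_mul, div_eq_inv_mul]

theorem Cgen_natCast (a r : ℕ) : Cgen a r = a.choose r := by
  rw [Cgen_natCast_right, Int.cast_natCast, Ring.choose_natCast]

theorem Cgen_zero_right (m : ℤ) : Cgen m 0 = 1 := by
  simpa using Cgen_natCast_right m 0

theorem Cgen_add_one_left (m r : ℤ) : Cgen (m + 1) r = Cgen m r + Cgen m (r - 1) := by
  rcases lt_or_ge r 0 with hr | hr
  · rw [Cgen_of_neg hr, Cgen_of_neg hr, Cgen_of_neg (by omega), add_zero]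
  obtain ⟨r, rfl⟩ := Int.eq_ofNat_of_zero_le hr
  cases r with
  | zero =>
    rw [Nat.cast_zero, zero_sub, Cgen_zero_right, Cgen_zero_right, Cgen_of_neg (by norm_num),
      add_zero]
  | succ r =>
    rw [Nat.cast_succ, add_sub_cancel_right, ← Nat.cast_succ, Cgen_natCast_right,
      Cgen_natCast_right, Cgen_natCast_right, Int.cast_add, Int.cast_one,
      Ring.choose_succ_succ, add_comm]

theorem eq_of_add_sub_one_eq {G : Type*} [AddCommGroup G] {f g : ℤ → G}
    (hf : ∀ j < 0, f j = 0) (hg : ∀ j < 0, g j = 0)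
    (h : ∀ j, f j + f (j - 1) = g j + g (j - 1)) : f = g := by
  have hnat : ∀ k : ℕ, f k = g k := by
    intro k
    induction k with
    | zero => simpa [hf (-1) (by norm_num), hg (-1) (by norm_num)] using h 0
    | succ k ih => simpa [ih] using h (k + 1)
  funext j
  rcases lt_or_ge j 0 with hj | hj
  · rw [hf j hj, hg j hj]
  · simpa [Int.toNat_of_nonneg hj] using hnat j.toNat

theorem Mcoef_eq_choose_mul_choose {m k l : ℕ} (h : k + l ≤ m) :
    Mcoef m k l = m.choose k * (m - k).choose l := by
  rw [Mcoef, if_pos h, Nat.cast_choose ℝ (show k ≤ m by omega),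
    Nat.cast_choose ℝ (show l ≤ m - k by omega), Nat.sub_sub]
  field_simp

theorem add_add_pow_eq_sum_Mcoef {A : Type*} [CommSemiring A] [Algebra ℝ A] (a b c : A)
    (m : ℕ) : (a + b + c) ^ m = ∑ k ∈ range (m + 1), ∑ l ∈ range (m + 1 - k),
      Mcoef m k l • (a ^ k * b ^ l * c ^ (m - k - l)) := by
  rw [add_assoc, add_pow]
  refine sum_congr rfl fun k hk => ?_
  have hkm : k ≤ m := Nat.lt_succ_iff.mp (mem_range.mp hk)
  rw [add_pow, Nat.sub_add_comm hkm, mul_sum, sum_mul]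
  refine sum_congr rfl fun l hl => ?_
  have hlm : k + l ≤ m := by have := mem_range.mp hl; omega
  rw [Mcoef_eq_choose_mul_choose hlm, Algebra.smul_def, map_mul, map_natCast, map_natCast,
    Nat.sub_sub]
  ring

theorem coeff_X_pow_mul_one_add_X_pow (e d j : ℕ) :
    ((X ^ e * (1 + X) ^ d : ℝ[X])).coeff j = Cgen d (j - e) := by
  rw [coeff_X_pow_mul']
  split_ifs with h
  · rw [coeff_one_add_X_pow, ← Cgen_natCast, Nat.cast_sub h]
  · rw [Cgen_of_neg (by omega)]

/-- `c` shifts the upper index of every `C̃`; `S(n, i)` is `hookSum (n / 2) (-1) i`. -/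
noncomputable def hookSum (m : ℕ) (c j : ℤ) : ℝ :=
  ∑ k ∈ range (m + 1), ∑ l ∈ range (m + 1 - k),
    Mcoef m k l * (-1) ^ l * Cgen (2 * ((m : ℤ) - k - l) + c) (j - 2 * l)

theorem hookSum_of_neg (m : ℕ) (c : ℤ) {j : ℤ} (hj : j < 0) : hookSum m c j = 0 :=
  sum_eq_zero fun k _ => sum_eq_zero fun l _ => by rw [Cgen_of_neg (by omega), mul_zero]

theorem hookSum_add_one (m : ℕ) (c j : ℤ) :
    hookSum m (c + 1) j = hookSum m c j + hookSum m c (j - 1) := by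
  simp only [hookSum, ← sum_add_distrib, ← mul_add, ← add_assoc, Cgen_add_one_left,
    sub_right_comm j 1]

theorem hookSum_zero (m : ℕ) (j : ℤ) : hookSum m 0 j = 2 ^ m * Cgen m j := by
  rcases lt_or_ge j 0 with hj | hj
  · rw [hookSum_of_neg m 0 hj, Cgen_of_neg hj, mul_zero]
  obtain ⟨j, rfl⟩ := Int.eq_ofNat_of_zero_le hj
  have hpoly : (C 2 * (1 + X)) ^ m =
      (1 + -X ^ 2 + (1 + X) ^ 2 : ℝ[X]) ^ m := by
    congr 1
    rw [map_ofNat]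
    ring
  have := congrArg (coeff · j) hpoly
  rw [mul_pow, ← map_pow, coeff_C_mul, coeff_one_add_X_pow, ← Cgen_natCast,
    add_add_pow_eq_sum_Mcoef, finsetSum_coeff] at this
  rw [this, hookSum]
  refine sum_congr rfl fun k _ => ?_
  rw [finsetSum_coeff]
  refine sum_congr rfl fun l hl => ?_
  have hlm : k + l ≤ m := by have := mem_range.mp hl; omega
  have hsign : (-1 : ℝ[X]) ^ l = C ((-1) ^ l) := by simp
  rw [one_pow, one_mul, neg_pow (X ^ 2 : ℝ[X]), hsign, ← pow_mul, ← pow_mul, coeff_smul,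
    mul_assoc (C _), coeff_C_mul, coeff_X_pow_mul_one_add_X_pow, smul_eq_mul, add_zero,
    mul_assoc]
  congr 3
  push_cast [Nat.sub_sub, Nat.cast_sub hlm]
  ring

theorem hookSum_eq (m : ℕ) (c j : ℤ) : hookSum m c j = 2 ^ m * Cgen (m + c) j := by
  suffices ∀ c : ℤ, hookSum m c = fun j => 2 ^ m * Cgen (m + c) j from congrFun (this c) j
  intro c
  induction c using Int.induction_on with
  | zero => exact funext (by simpa using hookSum_zero m)
  | succ c ih =>
    funext j
    rw [hookSum_add_one, ih, ← add_assoc, Cgen_add_one_left, mul_add]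
  | pred c ih =>
    refine eq_of_add_sub_one_eq (fun j hj => hookSum_of_neg m _ hj)
      (fun j hj => by rw [Cgen_of_neg hj, mul_zero]) fun j => ?_
    rw [← hookSum_add_one, sub_add_cancel, ih, ← mul_add, ← Cgen_add_one_left]
    ring_nf

theorem stmt13_general (n : ℕ) (hn : 2 ≤ n) (hne : Even n) (i : ℕ) (S : ℝ)
    (hS : S = ∑ k ∈ Finset.range (n / 2 + 1), ∑ l ∈ Finset.range (n / 2 + 1 - k),
        Mcoef (n / 2) k l * (-1 : ℝ) ^ l *
          Cgen ((n : ℤ) - 2 * k - 2 * l - 1) ((i : ℤ) - 2 * l)) :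
    (2 * i ≤ n - 1 → S = (2 : ℝ) ^ (n / 2) * ((n / 2 - 1).choose i : ℝ)) ∧
    (n / 2 ≤ i → S = 0) := by
  obtain ⟨m, rfl⟩ := hne
  have hm : (m + m) / 2 = m := by omega
  have hS' : S = 2 ^ m * (m - 1).choose i := by
    have hhook : S = hookSum m (-1) i := by
      rw [hS, hm, hookSum]
      refine sum_congr rfl fun k _ => sum_congr rfl fun l _ => ?_
      congr 2
      push_cast
      ring
    rw [hhook, hookSum_eq, show (m : ℤ) + -1 = (m - 1 : ℕ) by omega, Cgen_natCast]
  rw [hm]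
  exact ⟨fun _ => hS', fun hi => by rw [hS', Nat.choose_eq_zero_of_lt (by omega), Nat.cast_zero,
    mul_zero]⟩

/-- Evaluation of the hook eigenvalue numerator at `p = 1/2`:
`S(n,i) = 2^{n/2} C(n/2−1, i)` when `2i ≤ n−1`, and `S(n,i) = 0` when `i ≥ n/2`. -/
theorem stmt13 (n : ℕ) (hn : 2 ≤ n) (hne : Even n) (i : ℕ) (hi : i ≤ n - 1) (S : ℝ)
    (hS : S = ∑ k ∈ Finset.range (n / 2 + 1), ∑ l ∈ Finset.range (n / 2 + 1 - k),
        Mcoef (n / 2) k l * (-1 : ℝ) ^ l *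
          Cgen ((n : ℤ) - 2 * k - 2 * l - 1) ((i : ℤ) - 2 * l)) :
    (2 * i ≤ n - 1 → S = (2 : ℝ) ^ (n / 2) * ((n / 2 - 1).choose i : ℝ)) ∧
    (n / 2 ≤ i → S = 0) :=
  stmt13_general n hn hne i S hS
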